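/- arXiv:2201.06904 — 5 statements merged into one kernel-verified Lean document; each statement's English description precedes it below -/
import Mathlib

section
/- In a Schelling instance on a cubic graph G with |V|/2 red and |V|/2 blue agents where all vertices are occupied, the group welfare of each type under an assignment v equals |V|/2 − c(v)/3, where c(v) is the number of edges with endpoints of different types. Consequently, there exists an assignment with SW_R(v) ≥ |V|/2 − k/3 and SW_B(v) ≥ |V|/2 − k/3 if and only if V admits a bisection into two equal halves with at most k crossing edges. -/
/-!
Fix a `d`-regular graph, `d ≠ 0`, with every vertex occupied. An agent's utility is then the
number of its same-type neighbours divided by `d`. For a colour class `S`, each vertex of `S`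
has `d` neighbours, each either in `S` or across the cut; with two colours every cut edge has
exactly one endpoint in `S`, so the same-type neighbour counts over `S` sum to `d|S| - c(v)`
and the welfare of `S` is `|S| - c(v)/d`. For the equivalence, the red class of an assignment is a
bisection with cut `c(v)`, and every bisection `L` is the red class of some assignment, because
the colour classes have the same sizes as `L` and its complement.
-/

open Classical Finset

noncomputable section

variable {V A T : Type*}

def occNbrs (G : SimpleGraph V) [Fintype A] (v : A ↪ V) (i : A) : Finset A :=
  univ.filter fun j => G.Adj (v i) (v j)

def util (G : SimpleGraph V) [Fintype A] (τ : A → T) (v : A ↪ V) (i : A) : ℚ :=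
  if (occNbrs G v i).card = 0 then 0
  else ((occNbrs G v i).filter fun j => τ j = τ i).card / (occNbrs G v i).card

def SW (G : SimpleGraph V) [Fintype A] (τ : A → T) (v : A ↪ V) : ℚ :=
  ∑ i, util G τ v i

def sortedUtilOn (G : SimpleGraph V) [Fintype A] (τ : A → T) (v : A ↪ V) (S : Finset A) : List ℚ :=
  Multiset.sort (S.val.map (util G τ v)) (· ≥ ·)

def weakDom (x y : List ℚ) : Prop :=
  x.length = y.length ∧ ∀ (i : ℕ) (hx : i < x.length) (hy : i < y.length), y.get ⟨i, hy⟩ ≤ x.get ⟨i, hx⟩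

def strictDom (x y : List ℚ) : Prop :=
  weakDom x y ∧ ∃ (i : ℕ) (hx : i < x.length) (hy : i < y.length), y.get ⟨i, hy⟩ < x.get ⟨i, hx⟩

namespace SimpleGraph

variable [Fintype V] (G : SimpleGraph V)

def cutEdges [DecidableEq T] (σ : V → T) : Finset (Sym2 V) :=
  G.edgeFinset.filter fun e => ¬ (e.map σ).IsDiag

lemma cutEdges_comp {T' : Type*} [DecidableEq T] [DecidableEq T'] {f : T → T'}
    (hf : Function.Injective f) (σ : V → T) : G.cutEdges (f ∘ σ) = G.cutEdges σ := by
  ext e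
  simp only [cutEdges, mem_filter, ← Sym2.map_map, Sym2.isDiag_map hf]

lemma card_interedges_eq_sum (s t : Finset V) :
    #(G.interedges s t) = ∑ x ∈ s, #(G.neighborFinset x ∩ t) := by
  simp only [interedges_def, card_filter, sum_product]
  refine sum_congr rfl fun x _ => ?_
  rw [← card_filter]
  congr 1
  ext y
  simp [and_comm]

lemma card_cutEdges_decide_mem (s : Finset V) :
    #(G.cutEdges fun x => decide (x ∈ s)) = ∑ x ∈ s, #(G.neighborFinset x \ s) := by
  calc #(G.cutEdges fun x => decide (x ∈ s))
      = #(G.interedges s sᶜ) := by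
        refine (card_bij (fun p _ => s(p.1, p.2)) ?_ ?_ ?_).symm
        · rintro ⟨a, b⟩ hab
          rw [mk_mem_interedges_iff, mem_compl] at hab
          simp [cutEdges, hab.1, hab.2.1, hab.2.2]
        · rintro ⟨a, b⟩ hab ⟨a', b'⟩ hab' h
          rw [mk_mem_interedges_iff, mem_compl] at hab hab'
          rcases Sym2.eq_iff.1 h with ⟨rfl, rfl⟩ | ⟨rfl, rfl⟩
          · rfl
          · exact absurd hab.1 hab'.2.1
        · intro e he
          induction e using Sym2.ind with
          | _ a b =>
            simp only [cutEdges, mem_filter, mem_edgeFinset, mem_edgeSet, Sym2.map_mk,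
              Sym2.mk_isDiag_iff, decide_eq_decide] at he
            by_cases ha : a ∈ s
            · exact ⟨(a, b), by simp_all [mk_mem_interedges_iff], rfl⟩
            · refine ⟨(b, a), ?_, Sym2.eq_swap⟩
              simp_all [mk_mem_interedges_iff, G.adj_symm he.1]
    _ = ∑ x ∈ s, #(G.neighborFinset x \ s) := by
        simp only [card_interedges_eq_sum, sdiff_eq_inter_compl]

lemma sum_card_neighborFinset_inter_add_card_cutEdges {d : ℕ} (hreg : G.IsRegularOfDegree d)
    (s : Finset V) :
    ∑ x ∈ s, #(G.neighborFinset x ∩ s) + #(G.cutEdges fun x => decide (x ∈ s)) =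
      d * #s := by
  rw [card_cutEdges_decide_mem, ← sum_add_distrib]
  simp only [card_inter_add_card_sdiff, card_neighborFinset_eq_degree, hreg.degree_eq,
    sum_const, smul_eq_mul, mul_comm]

end SimpleGraph

open SimpleGraph

-- The guard in `util` is redundant: division by zero is zero in `ℚ`.
lemma util_eq_div (G : SimpleGraph V) [Fintype A] (τ : A → T) (v : A ↪ V) (i : A) :
    util G τ v i = #{j ∈ occNbrs G v i | τ j = τ i} / #(occNbrs G v i) := by
  rw [util]
  split_ifs with h <;> simp [h]

section Equiv

variable [Fintype V] [Fintype A] (G : SimpleGraph V)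

lemma util_of_equiv [DecidableEq T] (τ : A → T) (v : A ≃ V) (i : A) :
    util G τ v.toEmbedding i =
      #(G.neighborFinset (v i) ∩ ({x | τ (v.symm x) = τ i} : Finset V)) / G.degree (v i) := by
  rw [util_eq_div, ← card_neighborFinset_eq_degree]
  congr 2 <;> exact card_equiv v fun j => by simp [occNbrs]

theorem sum_util_eq_card_sub_card_cutEdges {d : ℕ} (hreg : G.IsRegularOfDegree d) (hd : d ≠ 0)
    (τ : A → Bool) (v : A ≃ V) (c : Bool) :
    ∑ i ∈ {i | τ i = c}, util G τ v.toEmbedding i =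
      #{i | τ i = c} - (#(G.cutEdges fun x => τ (v.symm x)) : ℚ) / d := by
  set s : Finset V := {x | τ (v.symm x) = c}
  have hsum : ∑ i ∈ {i | τ i = c}, util G τ v.toEmbedding i =
      ∑ x ∈ s, (#(G.neighborFinset x ∩ s) : ℚ) / d := by
    refine sum_equiv v (by simp [s]) fun i hi => ?_
    rw [mem_filter] at hi
    rw [util_of_equiv, hreg.degree_eq, hi.2]
  have hcard : #{i | τ i = c} = #s := card_equiv v (by simp [s])
  have hcut : G.cutEdges (fun x => τ (v.symm x)) = G.cutEdges fun x => decide (x ∈ s) := by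
    have hinj : Function.Injective fun b : Bool => decide (b = c) := by cases c <;> decide
    rw [← G.cutEdges_comp hinj]
    simp [s, Function.comp_def]
  have key := G.sum_card_neighborFinset_inter_add_card_cutEdges hreg s
  rw [hsum, ← sum_div, hcard, hcut, eq_sub_iff_add_eq, ← add_div, div_eq_iff (by simpa)]
  exact_mod_cast key.trans (mul_comm _ _)

end Equiv

lemma exists_equiv_comp_symm_eq [Fintype A] [Fintype V] [DecidableEq T]
    {τ : A → T} {σ : V → T} (h : ∀ c, #{i | τ i = c} = #{x | σ x = c}) :
    ∃ v : A ≃ V, ∀ x, τ (v.symm x) = σ x := by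
  have hfiber (c : T) : Fintype.card {x // σ x = c} = Fintype.card {i // τ i = c} := by
    simp only [Fintype.card_subtype, h]
  let e : V ≃ A := Equiv.ofFiberEquiv fun c => Fintype.equivOfCardEq (hfiber c)
  exact ⟨e.symm, Equiv.ofFiberEquiv_map _⟩

theorem cubic_group_welfare_and_bisection_general
    {V A : Type*} [Fintype V] [Fintype A]
    (G : SimpleGraph V) (hreg : G.IsRegularOfDegree 3)
    (heven : Even (Fintype.card V))
    (τ : A → Bool)
    (hr : (univ.filter (fun i => τ i = true)).card = Fintype.card V / 2)
    (hb : (univ.filter (fun i => τ i = false)).card = Fintype.card V / 2)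
    (k : ℕ) :
    (∀ v : A ≃ V, ∀ c : Bool,
        (∑ i ∈ univ.filter (fun i => τ i = c), util G τ v.toEmbedding i) =
          (Fintype.card V : ℚ) / 2 -
            ((G.edgeFinset.filter
                (fun e => ¬ (e.map (fun x => τ (v.symm x))).IsDiag)).card : ℚ) / 3) ∧
    ((∃ v : A ≃ V, ∀ c : Bool,
        (Fintype.card V : ℚ) / 2 - (k : ℚ) / 3 ≤
          ∑ i ∈ univ.filter (fun i => τ i = c), util G τ v.toEmbedding i) ↔
      (∃ L : Finset V, L.card = Fintype.card V / 2 ∧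
        (G.edgeFinset.filter
            (fun e => ¬ (e.map (fun x => decide (x ∈ L))).IsDiag)).card ≤ k)) := by
  have hhalf : ((Fintype.card V / 2 : ℕ) : ℚ) = Fintype.card V / 2 := by
    rw [Nat.cast_div heven.two_dvd two_ne_zero, Nat.cast_ofNat]
  have hcolor (c : Bool) : #{i | τ i = c} = Fintype.card V / 2 := by cases c <;> assumption
  have welfare (v : A ≃ V) (c : Bool) : ∑ i ∈ {i | τ i = c}, util G τ v.toEmbedding i =
      (Fintype.card V : ℚ) / 2 - (#(G.cutEdges fun x => τ (v.symm x)) : ℚ) / 3 := by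
    rw [sum_util_eq_card_sub_card_cutEdges G hreg three_ne_zero, hcolor, hhalf, Nat.cast_ofNat]
  refine ⟨welfare, fun ⟨v, hv⟩ => ?_, fun ⟨L, hL, hcut⟩ => ?_⟩
  · have hcut : (#(G.cutEdges fun x => τ (v.symm x)) : ℚ) ≤ k := by
      linarith [hv true, welfare v true]
    refine ⟨({x | τ (v.symm x) = true} : Finset V), ?_, by simpa [cutEdges] using hcut⟩
    rw [← hcolor true]
    exact (card_equiv v (by simp)).symm
  · obtain ⟨v, hv⟩ := exists_equiv_comp_symm_eq (τ := τ) (σ := (decide <| · ∈ L)) <| by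
      have hLc : #Lᶜ = Fintype.card V / 2 := by
        rw [card_compl, hL]
        have := Nat.two_mul_div_two_of_even heven
        omega
      intro c
      rw [hcolor]
      cases c <;> simp [hL, hLc, ← compl_filter]
    refine ⟨v, fun c => ?_⟩
    rw [welfare v c, show (fun x => τ (v.symm x)) = fun x => decide (x ∈ L) from funext hv]
    have : (#(G.cutEdges fun x => decide (x ∈ L)) : ℚ) ≤ k := by exact_mod_cast hcut
    linarith

theorem cubic_group_welfare_and_bisection
    {V A : Type*} [Fintype V] [Fintype A]
    (G : SimpleGraph V) (hreg : G.IsRegularOfDegree 3)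
    (heven : Even (Fintype.card V)) (hcard : Fintype.card A = Fintype.card V)
    (τ : A → Bool)
    (hr : (univ.filter (fun i => τ i = true)).card = Fintype.card V / 2)
    (hb : (univ.filter (fun i => τ i = false)).card = Fintype.card V / 2)
    (k : ℕ) :
    (∀ v : A ≃ V, ∀ c : Bool,
        (∑ i ∈ univ.filter (fun i => τ i = c), util G τ v.toEmbedding i) =
          (Fintype.card V : ℚ) / 2 -
            ((G.edgeFinset.filter
                (fun e => ¬ (e.map (fun x => τ (v.symm x))).IsDiag)).card : ℚ) / 3) ∧
    ((∃ v : A ≃ V, ∀ c : Bool,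
        (Fintype.card V : ℚ) / 2 - (k : ℚ) / 3 ≤
          ∑ i ∈ univ.filter (fun i => τ i = c), util G τ v.toEmbedding i) ↔
      (∃ L : Finset V, L.card = Fintype.card V / 2 ∧
        (G.edgeFinset.filter
            (fun e => ¬ (e.map (fun x => decide (x ∈ L))).IsDiag)).card ≤ k)) :=
  cubic_group_welfare_and_bisection_general G hreg heven τ hr hb k
end
end

section
/- Let H be a bipartite graph with parts L and R, let G be the complement graph of H on vertex set L ∪ R, and consider the Schelling instance on G with k red and k blue agents (k ≥ 2). Then G admits a perfect assignment (every agent utility 1) if and only if H contains a complete bipartite subgraph K_{k,k} with k vertices in L and k vertices in R. -/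
open Classical Finset

noncomputable section

variable {V A T : Type*}

/-! In the complement of `H`, an agent has utility 1 exactly when it is `H`-adjacent to every
agent of the other type and non-adjacent to some agent of its own type. So in a perfect
assignment the red and the blue positions span a complete bipartite subgraph of `H`, and
bipartiteness puts the two colour classes on opposite sides. Conversely, placing the agents
of each type on one side of a `K_{k,k}` is perfect: each side is independent in `H`, and
`k ≥ 2` gives every agent a neighbour of its own type. -/

lemma mem_occNbrs (G : SimpleGraph V) [Fintype A] (v : A ↪ V) (i j : A) :
    j ∈ occNbrs G v i ↔ G.Adj (v i) (v j) := by
  simp [occNbrs]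

lemma util_eq_one_iff (G : SimpleGraph V) [Fintype A] (τ : A → T) (v : A ↪ V) (i : A) :
    util G τ v i = 1 ↔ (occNbrs G v i).Nonempty ∧ ∀ j ∈ occNbrs G v i, τ j = τ i := by
  rw [util]
  split_ifs with h
  · simp [Finset.card_eq_zero.mp h]
  · have hQ : ((occNbrs G v i).card : ℚ) ≠ 0 := by exact_mod_cast h
    rw [div_eq_one_iff_eq hQ, Nat.cast_inj, Finset.card_filter_eq_iff]
    simp [Finset.card_ne_zero.mp h]

lemma util_compl_eq_one_iff (H : SimpleGraph V) [Fintype A] (τ : A → T) (v : A ↪ V) (i : A) :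
    util Hᶜ τ v i = 1 ↔
      (∃ j ≠ i, ¬H.Adj (v i) (v j)) ∧ ∀ j, τ j ≠ τ i → H.Adj (v i) (v j) := by
  simp only [util_eq_one_iff, Finset.Nonempty, mem_occNbrs, SimpleGraph.compl_adj,
    v.injective.ne_iff]
  refine and_congr (by simp only [ne_comm]) (forall_congr' fun j => ?_)
  constructor
  · intro h hτ
    by_contra hadj
    exact hτ (h ⟨fun hij => hτ (hij ▸ rfl), hadj⟩)
  · rintro h ⟨-, hadj⟩
    by_contra hτ
    exact hadj (h hτ)

lemma adj_of_util_compl_eq_one [Fintype A] {H : SimpleGraph V} {τ : A → T} {v : A ↪ V}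
    (hv : ∀ i, util Hᶜ τ v i = 1) {i j : A} (hij : τ i ≠ τ j) : H.Adj (v i) (v j) :=
  ((util_compl_eq_one_iff H τ v i).mp (hv i)).2 j hij.symm

namespace SimpleGraph.IsBipartiteWith

variable {G : SimpleGraph V} {s t X Y : Set V}

lemma not_adj_of_mem_left (h : G.IsBipartiteWith s t) {a b : V} (ha : a ∈ s) (hb : b ∈ s) :
    ¬G.Adj a b := fun hab =>
  Set.disjoint_left.mp h.disjoint hb (h.mem_of_mem_adj ha hab)

lemma subset_of_forall_adj (h : G.IsBipartiteWith s t) (hXY : ∀ x ∈ X, ∀ y ∈ Y, G.Adj x y)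
    {x₀ y₀ : V} (hx₀ : x₀ ∈ X) (hy₀ : y₀ ∈ Y) (hx₀s : x₀ ∈ s) : X ⊆ s ∧ Y ⊆ t := by
  have hYt : Y ⊆ t := fun y hy => h.mem_of_mem_adj hx₀s (hXY x₀ hx₀ y hy)
  exact ⟨fun x hx => h.mem_of_mem_adj' (hYt hy₀) (hXY x hx y₀ hy₀), hYt⟩

lemma subset_or_subset_of_forall_adj (h : G.IsBipartiteWith s t)
    (hXY : ∀ x ∈ X, ∀ y ∈ Y, G.Adj x y) (hX : X.Nonempty) (hY : Y.Nonempty) :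
    (X ⊆ s ∧ Y ⊆ t) ∨ (X ⊆ t ∧ Y ⊆ s) := by
  obtain ⟨x₀, hx₀⟩ := hX
  obtain ⟨y₀, hy₀⟩ := hY
  rcases h.mem_of_adj (hXY x₀ hx₀ y₀ hy₀) with ⟨hx₀s, -⟩ | ⟨hx₀t, -⟩
  · exact .inl (h.subset_of_forall_adj hXY hx₀ hy₀ hx₀s)
  · exact .inr (h.symm.subset_of_forall_adj hXY hx₀ hy₀ hx₀t)

end SimpleGraph.IsBipartiteWith

lemma exists_biclique_of_util_compl_eq_one [Fintype A] {H : SimpleGraph V} {L R : Finset V}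
    (hH : H.IsBipartiteWith L R) {τ : A → Bool} {k : ℕ} (hk : 0 < k)
    (hred : #{i | τ i = true} = k) (hblue : #{i | τ i = false} = k) {v : A ↪ V}
    (hv : ∀ i, util Hᶜ τ v i = 1) :
    ∃ S T : Finset V, S ⊆ L ∧ T ⊆ R ∧ #S = k ∧ #T = k ∧ ∀ a ∈ S, ∀ b ∈ T, H.Adj a b := by
  set reds := univ.filter (fun i => τ i = true)
  set blues := univ.filter (fun i => τ i = false)
  have hadj : ∀ a ∈ (reds.map v : Set V), ∀ b ∈ (blues.map v : Set V), H.Adj a b := by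
    simp only [Finset.coe_map, Set.mem_image, Finset.mem_coe, Finset.mem_filter, reds, blues]
    rintro _ ⟨i, ⟨-, hi⟩, rfl⟩ _ ⟨j, ⟨-, hj⟩, rfl⟩
    exact adj_of_util_compl_eq_one hv (by simp [hi, hj])
  have hne : ∀ s : Finset A, #s = k → (s.map v : Set V).Nonempty := fun s hs =>
    Finset.coe_nonempty.mpr (Finset.card_pos.mp (by rw [Finset.card_map]; omega))
  rcases hH.subset_or_subset_of_forall_adj hadj (hne _ hred) (hne _ hblue) with
    ⟨hXL, hYR⟩ | ⟨hXR, hYL⟩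
  · exact ⟨reds.map v, blues.map v, Finset.coe_subset.mp hXL, Finset.coe_subset.mp hYR,
      by simpa using hred, by simpa using hblue, hadj⟩
  · exact ⟨blues.map v, reds.map v, Finset.coe_subset.mp hYL, Finset.coe_subset.mp hXR,
      by simpa using hblue, by simpa using hred, fun a ha b hb => (hadj b hb a ha).symm⟩

lemma exists_embedding_mapsTo_of_card_le [Fintype A] (p : A → Prop) [DecidablePred p]
    {s t : Finset V} (hst : Disjoint s t) (hs : #{i | p i} ≤ #s) (ht : #{i | ¬p i} ≤ #t) :
    ∃ v : A ↪ V, (∀ i, p i → v i ∈ s) ∧ ∀ i, ¬p i → v i ∈ t := by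
  obtain ⟨e₁⟩ : Nonempty ({i // p i} ↪ s) :=
    Function.Embedding.nonempty_of_card_le (by simpa [Fintype.card_subtype] using hs)
  obtain ⟨e₂⟩ : Nonempty ({i // ¬p i} ↪ t) :=
    Function.Embedding.nonempty_of_card_le (by simpa [Fintype.card_subtype] using ht)
  refine ⟨(Equiv.sumCompl p).symm.toEmbedding.trans
    ((e₁.sumMap e₂).trans (Function.Embedding.sumSet (Finset.disjoint_coe.mpr hst))),
    fun i hi => ?_, fun i hi => ?_⟩
  · simp only [Function.Embedding.trans_apply, Equiv.coe_toEmbedding,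
      Equiv.sumCompl_symm_apply_of_pos hi, Function.Embedding.coe_sumMap, Sum.map_inl]
    exact (e₁ ⟨i, hi⟩).2
  · simp only [Function.Embedding.trans_apply, Equiv.coe_toEmbedding,
      Equiv.sumCompl_symm_apply_of_neg hi, Function.Embedding.coe_sumMap, Sum.map_inr]
    exact (e₂ ⟨i, hi⟩).2

lemma util_compl_eq_one_of_mapsTo_biclique [Fintype A] {H : SimpleGraph V} {s t S T : Set V}
    (hH : H.IsBipartiteWith s t) (hS : S ⊆ s) (hT : T ⊆ t) (hST : ∀ a ∈ S, ∀ b ∈ T, H.Adj a b)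
    {τ : A → Bool} {v : A ↪ V} (hvS : ∀ i, τ i = true → v i ∈ S)
    (hvT : ∀ i, τ i = false → v i ∈ T) (hτ : ∀ i, ∃ j ≠ i, τ j = τ i) (i : A) :
    util Hᶜ τ v i = 1 := by
  rw [util_compl_eq_one_iff]
  obtain ⟨j, hji, hτj⟩ := hτ i
  refine ⟨⟨j, hji, ?_⟩, fun j hj => ?_⟩
  · cases hi : τ i
    · exact hH.symm.not_adj_of_mem_left (hT (hvT i hi)) (hT (hvT j (hτj.trans hi)))
    · exact hH.not_adj_of_mem_left (hS (hvS i hi)) (hS (hvS j (hτj.trans hi)))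
  · cases hi : τ i
    · exact (hST _ (hvS j (by simpa [hi] using hj)) _ (hvT i hi)).symm
    · exact hST _ (hvS i hi) _ (hvT j (by simpa [hi] using hj))

lemma exists_util_compl_eq_one_of_biclique [Fintype A] {H : SimpleGraph V} {L R S T : Finset V}
    (hH : H.IsBipartiteWith L R) {τ : A → Bool} {k : ℕ} (hk : 2 ≤ k)
    (hred : #{i | τ i = true} = k) (hblue : #{i | τ i = false} = k)
    (hSL : S ⊆ L) (hTR : T ⊆ R) (hS : #S = k) (hT : #T = k)
    (hST : ∀ a ∈ S, ∀ b ∈ T, H.Adj a b) :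
    ∃ v : A ↪ V, ∀ i, util Hᶜ τ v i = 1 := by
  obtain ⟨v, hvS, hvT⟩ := exists_embedding_mapsTo_of_card_le (fun i => τ i = true)
    (Finset.disjoint_coe.mp (hH.disjoint.mono hSL hTR)) (hred.trans hS.symm).le
    (by simp [hblue, hT])
  have hτ : ∀ i, ∃ j ≠ i, τ j = τ i := fun i => by
    have hcard : #(univ.filter (τ · = τ i)) = k := by cases τ i <;> assumption
    obtain ⟨j, hj, hji⟩ := Finset.exists_mem_ne (by omega : 1 < #(univ.filter (τ · = τ i))) i
    exact ⟨j, hji, (Finset.mem_filter.mp hj).2⟩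
  exact ⟨v, util_compl_eq_one_of_mapsTo_biclique hH (Finset.coe_subset.mpr hSL)
    (Finset.coe_subset.mpr hTR) hST hvS (fun i hi => hvT i (by simp [hi])) hτ⟩

theorem perfect_on_complement_iff_biclique_general
    {W A : Type*} [Fintype A]
    (H : SimpleGraph W) (L R : Finset W)
    (hdisj : Disjoint L R)
    (hbip : ∀ u w, H.Adj u w → ((u ∈ L ∧ w ∈ R) ∨ (u ∈ R ∧ w ∈ L)))
    (τ : A → Bool) (k : ℕ) (hk : 2 ≤ k)
    (hred : (univ.filter (fun i => τ i = true)).card = k)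
    (hblue : (univ.filter (fun i => τ i = false)).card = k) :
    (∃ v : A ↪ W, ∀ i, util Hᶜ τ v i = 1) ↔
      (∃ S T : Finset W, S ⊆ L ∧ T ⊆ R ∧ S.card = k ∧ T.card = k ∧
        ∀ a ∈ S, ∀ b ∈ T, H.Adj a b) := by
  have hH : H.IsBipartiteWith L R := ⟨Finset.disjoint_coe.mpr hdisj, fun _ _ => hbip _ _⟩
  constructor
  · rintro ⟨v, hv⟩
    exact exists_biclique_of_util_compl_eq_one hH (by omega) hred hblue hv
  · rintro ⟨S, T, hSL, hTR, hS, hT, hST⟩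
    exact exists_util_compl_eq_one_of_biclique hH hk hred hblue hSL hTR hS hT hST

theorem perfect_on_complement_iff_biclique
    {W A : Type*} [Fintype W] [Fintype A]
    (H : SimpleGraph W) (L R : Finset W)
    (hdisj : Disjoint L R) (hunion : L ∪ R = univ)
    (hbip : ∀ u w, H.Adj u w → ((u ∈ L ∧ w ∈ R) ∨ (u ∈ R ∧ w ∈ L)))
    (τ : A → Bool) (k : ℕ) (hk : 2 ≤ k)
    (hred : (univ.filter (fun i => τ i = true)).card = k)
    (hblue : (univ.filter (fun i => τ i = false)).card = k) :
    (∃ v : A ↪ W, ∀ i, util Hᶜ τ v i = 1) ↔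
      (∃ S T : Finset W, S ⊆ L ∧ T ⊆ R ∧ S.card = k ∧ T.card = k ∧
        ∀ a ∈ S, ∀ b ∈ T, H.Adj a b) :=
  perfect_on_complement_iff_biclique_general H L R hdisj hbip τ k hk hred hblue
end
end

section
/- In any perfect assignment of a two-type Schelling instance on the complement of a bipartite graph H = (L ∪ R, Y) with k ≥ 2 red and k ≥ 2 blue agents, all red agents occupy vertices of one part and all blue agents occupy vertices of the other part. -/
open Classical Finset

noncomputable section

variable {V A T : Type*}

/-!
Every agent's occupied neighbours share its type, so two agents of different types are not
adjacent in `Hᶜ`; being distinct vertices, they are adjacent in `H` and hence lie in different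
parts. A red agent `r` and a blue agent `b` exist, so every red agent is on the side of `r` and
every blue agent on the opposite one.
-/

theorem type_eq_of_adj_of_util_eq_one {G : SimpleGraph V} [Fintype A] {τ : A → T} {v : A ↪ V}
    {i j : A} (hi : util G τ v i = 1) (hij : G.Adj (v i) (v j)) : τ j = τ i := by
  unfold util at hi
  split_ifs at hi with h0
  · exact absurd hi zero_ne_one
  · rw [div_eq_one_iff_eq (by exact_mod_cast h0)] at hi
    exact card_filter_eq_iff.mp (by exact_mod_cast hi) j (by simpa [occNbrs] using hij)

theorem adj_of_type_ne_of_util_compl_eq_one {H : SimpleGraph V} [Fintype A] {τ : A → T}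
    {v : A ↪ V} {i j : A} (hi : util Hᶜ τ v i = 1) (hij : τ i ≠ τ j) : H.Adj (v i) (v j) := by
  by_contra hH
  have hne : v i ≠ v j := v.injective.ne fun h => hij (congrArg τ h)
  exact hij (type_eq_of_adj_of_util_eq_one hi ((H.compl_adj _ _).mpr ⟨hne, hH⟩)).symm

theorem mem_iff_notMem_of_adj {H : SimpleGraph V} {L R : Finset V} (hdisj : Disjoint L R)
    (hbip : ∀ u w, H.Adj u w → ((u ∈ L ∧ w ∈ R) ∨ (u ∈ R ∧ w ∈ L))) {u w : V}
    (huw : H.Adj u w) : u ∈ L ↔ w ∉ L := by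
  rcases hbip u w huw with ⟨hu, hw⟩ | ⟨hu, hw⟩
  · exact iff_of_true hu fun hwL => disjoint_left.mp hdisj hwL hw
  · exact iff_of_false (fun huL => disjoint_left.mp hdisj huL hu) (not_not.mpr hw)

theorem mem_right_iff_notMem_left [Fintype V] {L R : Finset V} (hdisj : Disjoint L R)
    (hunion : L ∪ R = univ) (w : V) : w ∈ R ↔ w ∉ L :=
  ⟨fun hR hL => disjoint_left.mp hdisj hL hR,
    fun hL => (mem_union.mp (hunion ▸ mem_univ w)).resolve_left hL⟩

theorem perfect_on_complement_separates_types
    {W A : Type*} [Fintype W] [Fintype A]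
    (H : SimpleGraph W) (L R : Finset W)
    (hdisj : Disjoint L R) (hunion : L ∪ R = univ)
    (hbip : ∀ u w, H.Adj u w → ((u ∈ L ∧ w ∈ R) ∨ (u ∈ R ∧ w ∈ L)))
    (τ : A → Bool) (k : ℕ) (hk : 2 ≤ k)
    (hred : (univ.filter (fun i => τ i = true)).card = k)
    (hblue : (univ.filter (fun i => τ i = false)).card = k)
    (v : A ↪ W) (hperf : ∀ i, util Hᶜ τ v i = 1) :
    (∀ i, (τ i = true → v i ∈ L) ∧ (τ i = false → v i ∈ R)) ∨
    (∀ i, (τ i = true → v i ∈ R) ∧ (τ i = false → v i ∈ L)) := by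
  obtain ⟨r, -, hr⟩ := filter_nonempty_iff.mp <| card_pos.mp
    (by omega : 0 < #(univ.filter fun i => τ i = true))
  obtain ⟨b, -, hb⟩ := filter_nonempty_iff.mp <| card_pos.mp
    (by omega : 0 < #(univ.filter fun i => τ i = false))
  have hside : ∀ i j, τ i ≠ τ j → (v i ∈ L ↔ v j ∉ L) := fun i j hij =>
    mem_iff_notMem_of_adj hdisj hbip (adj_of_type_ne_of_util_compl_eq_one (hperf i) hij)
  have hred_side : ∀ i, τ i = true → (v i ∈ L ↔ v r ∈ L) := fun i hi => by
    have := hside i b (by simp [hi, hb]); have := hside r b (by simp [hr, hb]); tauto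
  have hblue_side : ∀ i, τ i = false → (v i ∈ L ↔ v r ∉ L) := fun i hi => by
    have := hside r i (by simp [hr, hi]); tauto
  simp only [mem_right_iff_notMem_left hdisj hunion]
  by_cases hrL : v r ∈ L
  · exact .inl fun i => ⟨fun hi => (hred_side i hi).mpr hrL,
      fun hi hiL => (hblue_side i hi).mp hiL hrL⟩
  · exact .inr fun i => ⟨fun hi hiL => hrL ((hred_side i hi).mp hiL),
      fun hi => (hblue_side i hi).mpr hrL⟩
end
end

section
/- Let G be a graph with maximum degree Δ whose largest connected component C_1 satisfies |C_1| ≥ (Δ+1)·r·(1 + Δ·b), and let X ⊆ C_1 be any connected set of r vertices. Then the graph induced on C_1 \ N[X] (where N[X] is the closed neighborhood of X) has a connected component with at least b vertices. -/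
open Classical Finset

noncomputable section

variable {V A T : Type*}

def closedNbhd {V : Type*} [Fintype V] (G : SimpleGraph V) (X : Finset V) : Finset V :=
  X ∪ univ.filter fun y => ∃ x ∈ X, G.Adj x y

/-! `N[X]` has at most `(Δ + 1) r` vertices, so `R = C₁ \ N[X]` has at least `(Δ + 1) r Δ b`.
Since `C₁` is connected and meets `N[X]`, a path inside `C₁` from any vertex of `R` towards `X`
leaves `R` for the first time through a neighbour of `N[X]`; hence every component of `G[R]`
contains one of the at most `Δ (Δ + 1) r` neighbours of `N[X]`, and pigeonhole gives a component
with at least `b` vertices. -/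

namespace SimpleGraph

variable {W : Type*} {G : SimpleGraph V}

lemma Connected.induce_image_val {s : Set V} {T : Set s}
    (hT : ((G.induce s).induce T).Connected) : (G.induce (Subtype.val '' T)).Connected :=
  hT.map (induceHom (Embedding.induce s).toHom (Set.mapsTo_image _ _))
    (by rintro ⟨_, x, hx, rfl⟩; exact ⟨⟨x, hx⟩, rfl⟩)

lemma Reachable.exists_induce_reachable_adj_notMem {s : Set V} {u w : V} (hu : u ∈ s)
    (hw : w ∉ s) (h : G.Reachable u w) :
    ∃ v, ∃ hv : v ∈ s, (G.induce s).Reachable ⟨u, hu⟩ ⟨v, hv⟩ ∧ ∃ y ∉ s, G.Adj v y := by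
  obtain ⟨p⟩ := h
  induction p with
  | nil => exact absurd hu hw
  | @cons u v w huv _ ih =>
    by_cases hv : v ∈ s
    · obtain ⟨x, hx, hvx, hexit⟩ := ih hv hw
      have huv' : (G.induce s).Adj ⟨u, hu⟩ ⟨v, hv⟩ := huv
      exact ⟨x, hx, huv'.reachable.trans hvx, hexit⟩
    · exact ⟨u, hu, .rfl, v, hv, huv⟩

lemma card_connectedComponent_le_of_forall_exists_reachable {H : SimpleGraph W}
    [Fintype H.ConnectedComponent] {B : Finset W} (hB : ∀ u, ∃ v ∈ B, H.Reachable u v) :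
    Fintype.card H.ConnectedComponent ≤ B.card :=
  card_le_card_of_surjOn H.connectedComponentMk fun c _ ↦ by
    obtain ⟨u, rfl⟩ := c.exists_rep
    obtain ⟨v, hv, huv⟩ := hB u
    exact ⟨v, hv, (ConnectedComponent.sound huv).symm⟩

lemma exists_subset_induce_connected_le_card {R : Finset V} {b : ℕ} (hR : R.Nonempty)
    (hcard : Fintype.card (G.induce (R : Set V)).ConnectedComponent * b ≤ R.card) :
    ∃ S ⊆ R, (G.induce (S : Set V)).Connected ∧ b ≤ S.card := by
  have : Nonempty (R : Set V) := hR.coe_sort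
  obtain ⟨c, hc⟩ := Fintype.exists_le_card_fiber_of_mul_le_card
    (f := (G.induce (R : Set V)).connectedComponentMk) (by simpa using hcard)
  set S := (univ.filter fun x ↦ (G.induce (R : Set V)).connectedComponentMk x = c).map
    (Function.Embedding.subtype _)
  have hS : (S : Set V) = Subtype.val '' c.supp := by
    ext x
    simp [S, ConnectedComponent.mem_supp_iff]
  refine ⟨S, fun x hx ↦ ?_, hS ▸ Connected.induce_image_val c.connected_toSimpleGraph,
    by simpa [S] using hc⟩
  obtain ⟨y, -, rfl⟩ := mem_map.mp hx
  exact y.2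

variable [Fintype V] {Δ : ℕ}

lemma card_biUnion_neighborFinset_le (hdeg : ∀ x, G.degree x ≤ Δ) (N : Finset V) :
    (N.biUnion fun x ↦ G.neighborFinset x).card ≤ N.card * Δ :=
  card_biUnion_le.trans (sum_le_card_nsmul _ _ _ fun x _ ↦ hdeg x)

lemma card_closedNbhd_le (hdeg : ∀ x, G.degree x ≤ Δ) (X : Finset V) :
    (closedNbhd G X).card ≤ (Δ + 1) * X.card := by
  have hsub : closedNbhd G X ⊆ X ∪ X.biUnion fun x ↦ G.neighborFinset x := by
    intro y hy
    simp only [closedNbhd, mem_union, mem_filter, mem_univ, true_and] at hy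
    simpa [mem_union, mem_biUnion, mem_neighborFinset] using hy
  calc (closedNbhd G X).card ≤ (X ∪ X.biUnion fun x ↦ G.neighborFinset x).card :=
        card_le_card hsub
    _ ≤ X.card + X.card * Δ :=
      (card_union_le _ _).trans (by gcongr; exact card_biUnion_neighborFinset_le hdeg X)
    _ = (Δ + 1) * X.card := by ring

lemma card_connectedComponent_induce_sdiff_le (hdeg : ∀ x, G.degree x ≤ Δ) {C N : Finset V}
    (hC : (G.induce (C : Set V)).Connected) (hNC : (N ∩ C).Nonempty) :
    Fintype.card (G.induce ((C \ N : Finset V) : Set V)).ConnectedComponent ≤ N.card * Δ := by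
  obtain ⟨x, hx⟩ := hNC
  obtain ⟨hxN, hxC⟩ := mem_inter.mp hx
  let φ : (G.induce (C : Set V)).induce {v | ↑v ∉ N} →g
      G.induce ((C \ N : Finset V) : Set V) :=
    induceHom (Embedding.induce _).toHom fun v hv ↦ mem_sdiff.mpr ⟨v.2, hv⟩
  refine (card_connectedComponent_le_of_forall_exists_reachable
    (B := (N.biUnion fun x ↦ G.neighborFinset x).subtype (· ∈ ((C \ N : Finset V) : Set V)))
    ?_).trans ?_
  · rintro ⟨u, hu⟩
    obtain ⟨huC, huN⟩ := mem_sdiff.mp hu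
    obtain ⟨v, hvN, huv, y, hyN, hvy⟩ :=
      (hC.preconnected ⟨u, huC⟩ ⟨x, hxC⟩).exists_induce_reachable_adj_notMem
        (s := {v | ↑v ∉ N}) huN (by simpa using hxN)
    refine ⟨φ ⟨v, hvN⟩, ?_, huv.map φ⟩
    simp only [mem_subtype, mem_biUnion, mem_neighborFinset]
    exact ⟨y, not_not.mp hyN, hvy.symm⟩
  · rw [card_subtype]
    exact (card_filter_le _ _).trans (card_biUnion_neighborFinset_le hdeg N)

end SimpleGraph

theorem large_component_remainder_has_big_component_general
    {V : Type*} [Fintype V] (G : SimpleGraph V) (Δ r b : ℕ)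
    (hΔ : 1 ≤ Δ) (hr : 1 ≤ r) (hb : 1 ≤ b)
    (hdeg : ∀ x : V, G.degree x ≤ Δ)
    (C1 : Finset V)
    (hC1conn : (G.induce (C1 : Set V)).Connected)
    (hsize : (Δ + 1) * r * (1 + Δ * b) ≤ C1.card)
    (X : Finset V) (hX : X ⊆ C1)
    (hXcard : X.card = r) :
    ∃ S : Finset V, (S : Set V) ⊆ (C1 : Set V) \ (closedNbhd G X : Set V) ∧
      (G.induce (S : Set V)).Connected ∧ b ≤ S.card := by
  set N := closedNbhd G X
  have hN : N.card ≤ (Δ + 1) * r := hXcard ▸ SimpleGraph.card_closedNbhd_le hdeg X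
  have hR : (Δ + 1) * r * Δ * b ≤ (C1 \ N).card := by
    have hsplit : (Δ + 1) * r * (1 + Δ * b) = (Δ + 1) * r + (Δ + 1) * r * Δ * b := by ring
    have := le_card_sdiff N C1
    omega
  obtain ⟨x, hx⟩ := card_pos.mp (hXcard ▸ hr : 0 < X.card)
  have hcomp := SimpleGraph.card_connectedComponent_induce_sdiff_le hdeg hC1conn (N := N)
    ⟨x, mem_inter.mpr ⟨mem_union_left _ hx, hX hx⟩⟩
  have hRne : (C1 \ N).Nonempty :=
    card_pos.mp ((by positivity : 0 < (Δ + 1) * r * Δ * b).trans_le hR)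
  obtain ⟨S, hSR, hS, hSb⟩ := SimpleGraph.exists_subset_induce_connected_le_card hRne (b := b)
    (calc _ ≤ N.card * Δ * b := by gcongr
      _ ≤ (Δ + 1) * r * Δ * b := by gcongr
      _ ≤ (C1 \ N).card := hR)
  exact ⟨S, coe_sdiff C1 N ▸ coe_subset.mpr hSR, hS, hSb⟩

theorem large_component_remainder_has_big_component
    {V : Type*} [Fintype V] (G : SimpleGraph V) (Δ r b : ℕ)
    (hΔ : 1 ≤ Δ) (hr : 1 ≤ r) (hb : 1 ≤ b)
    (hdeg : ∀ x : V, G.degree x ≤ Δ)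
    (C1 : Finset V)
    (hC1conn : (G.induce (C1 : Set V)).Connected)
    (hC1closed : ∀ x ∈ C1, ∀ y : V, G.Adj x y → y ∈ C1)
    (hsize : (Δ + 1) * r * (1 + Δ * b) ≤ C1.card)
    (X : Finset V) (hX : X ⊆ C1)
    (hXconn : (G.induce (X : Set V)).Connected)
    (hXcard : X.card = r) :
    ∃ S : Finset V, (S : Set V) ⊆ (C1 : Set V) \ (closedNbhd G X : Set V) ∧
      (G.induce (S : Set V)).Connected ∧ b ≤ S.card :=
  large_component_remainder_has_big_component_general G Δ r b hΔ hr hb hdeg C1 hC1conn hsize X hX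
    hXcard
end
end

section
/- Let G have connected components C_1, ..., C_k ordered by non-increasing size, and consider a two-type Schelling instance with r red and b blue agents (r + b ≤ |V|). Then there exists a welfare-optimal assignment that places agents only on the r + b largest components C_1, ..., C_{r+b}. -/
open Classical Finset

noncomputable section

variable {V A T : Type*}

/-!
Among the welfare-optimal assignments take one with the fewest agents outside `C 0, …, C (r+b-1)`.
If an agent sits in a component `C q` with `q ≥ r + b`, then, since at most `r + b` components are
occupied, some `C p` with `p < r + b` is empty, and `|C p| ≥ |C q|`. Move all agents of that agent's
type out of `C q` onto a subset of `C p` in which every vertex has a neighbour (a connected graph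
has such subsets of every size `≥ 2`). The moved agents now have utility `1` (or had utility `0`, if
only one was moved), the agents left in `C q` only lose neighbours of the other type, and nobody
else is affected; so welfare does not drop while fewer agents are outside, a contradiction.
-/

section Utility

variable [Fintype A] (G : SimpleGraph V) (τ : A → T)

lemma util_nonneg (v : A ↪ V) (i : A) : 0 ≤ util G τ v i := by
  unfold util
  split <;> positivity

lemma util_le_one (v : A ↪ V) (i : A) : util G τ v i ≤ 1 := by
  unfold util
  split
  · exact zero_le_one
  · exact div_le_one_of_le₀ (by exact_mod_cast card_filter_le _ _) (by positivity)

lemma util_eq_one {v : A ↪ V} {i : A} (hne : (occNbrs G v i).Nonempty)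
    (h : ∀ j ∈ occNbrs G v i, τ j = τ i) : util G τ v i = 1 := by
  have hpos : (0 : ℚ) < #(occNbrs G v i) := by exact_mod_cast hne.card_pos
  rw [util, if_neg hne.card_pos.ne', filter_true_of_mem h, div_self hpos.ne']

lemma util_eq_zero {v : A ↪ V} {i : A} (h : ∀ j ∈ occNbrs G v i, τ j ≠ τ i) :
    util G τ v i = 0 := by
  simp [util, filter_false_of_mem h]

lemma util_le_util_of_occNbrs_subset {v v' : A ↪ V} {i : A}
    (hsub : occNbrs G v' i ⊆ occNbrs G v i)
    (hsame : (occNbrs G v i).filter (fun j => τ j = τ i) ⊆ occNbrs G v' i) :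
    util G τ v i ≤ util G τ v' i := by
  have hfilter : (occNbrs G v i).filter (fun j => τ j = τ i)
      = (occNbrs G v' i).filter (fun j => τ j = τ i) :=
    Subset.antisymm (fun j hj => mem_filter.2 ⟨hsame hj, (mem_filter.1 hj).2⟩)
      (filter_subset_filter _ hsub)
  rcases (occNbrs G v' i).eq_empty_or_nonempty with hemp | hne
  · simp [util, hfilter, hemp]
  · have hpos : (0 : ℚ) < #(occNbrs G v' i) := by exact_mod_cast hne.card_pos
    rw [util, util, if_neg (card_pos.2 hne).ne', if_neg (card_pos.2 (hne.mono hsub)).ne', hfilter]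
    exact div_le_div_of_nonneg_left (by positivity) hpos (by exact_mod_cast card_le_card hsub)

end Utility

section ConnectedSubsets

variable {G : SimpleGraph V} {P U : Finset V}

lemma exists_adj_mem_sdiff_of_ssubset (hP : (G.induce (P : Set V)).Connected)
    (hU : U.Nonempty) (hUP : U ⊂ P) : ∃ x ∈ U, ∃ y ∈ P \ U, G.Adj x y := by
  obtain ⟨u, hu⟩ := hU
  obtain ⟨w, hwP, hwU⟩ := exists_of_ssubset hUP
  obtain ⟨p⟩ := hP.preconnected ⟨u, hUP.subset hu⟩ ⟨w, hwP⟩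
  obtain ⟨d, -, hd₁, hd₂⟩ := p.exists_boundary_dart {z | z.val ∈ U} hu hwU
  exact ⟨d.fst, hd₁, d.snd, mem_sdiff.2 ⟨d.snd.2, hd₂⟩, d.adj⟩

lemma exists_subset_card_eq_forall_exists_adj (hP : (G.induce (P : Set V)).Connected) {s : ℕ}
    (hs₂ : 2 ≤ s) (hs : s ≤ #P) : ∃ U ⊆ P, #U = s ∧ ∀ x ∈ U, ∃ y ∈ U, G.Adj x y := by
  induction s, hs₂ using Nat.le_induction with
  | base =>
    obtain ⟨a, ha⟩ := card_pos.1 (by omega : 0 < #P)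
    obtain ⟨x, hx, y, hy, hxy⟩ := exists_adj_mem_sdiff_of_ssubset hP (singleton_nonempty a)
      (ssubset_of_subset_of_ne (singleton_subset_iff.2 ha) fun h => by simp [← h] at hs)
    rw [mem_singleton] at hx
    subst hx
    refine ⟨{x, y}, insert_subset ha (singleton_subset_iff.2 (mem_sdiff.1 hy).1),
      card_pair hxy.ne, ?_⟩
    rintro z hz
    rcases mem_insert.1 hz with rfl | hz
    · exact ⟨y, by simp, hxy⟩
    · obtain rfl := mem_singleton.1 hz
      exact ⟨x, by simp, hxy.symm⟩
  | succ s hs₂ ih =>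
    obtain ⟨U, hUP, hUs, hU⟩ := ih (by omega)
    obtain ⟨x, hx, y, hy, hxy⟩ := exists_adj_mem_sdiff_of_ssubset hP
      (card_pos.1 (by omega)) (ssubset_of_subset_of_ne hUP fun h => by subst h; omega)
    obtain ⟨hyP, hyU⟩ := mem_sdiff.1 hy
    refine ⟨insert y U, insert_subset hyP hUP, by rw [card_insert_of_notMem hyU, hUs], ?_⟩
    simp only [mem_insert, forall_eq_or_imp, exists_eq_or_imp]
    exact ⟨Or.inr ⟨x, hx, hxy.symm⟩, fun z hz => Or.inr (hU z hz)⟩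

end ConnectedSubsets

section Relocation

variable {v : A ↪ V} {S : Finset A} {U : Finset V}

def relocate (v : A ↪ V) (e : S ≃ U) (hU : ∀ i, v i ∉ U) : A ↪ V where
  toFun i := if h : i ∈ S then e ⟨i, h⟩ else v i
  inj' i j hij := by
    by_cases hi : i ∈ S <;> by_cases hj : j ∈ S <;>
      simp only [hi, hj, dite_true, dite_false] at hij
    · simpa using e.injective (Subtype.ext hij)
    · exact absurd (hij ▸ (e ⟨i, hi⟩).2) (hU j)
    · exact absurd (hij ▸ (e ⟨j, hj⟩).2) (hU i)
    · exact v.injective hij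

variable (e : S ≃ U) (hU : ∀ i, v i ∉ U)

lemma relocate_apply_of_mem {i : A} (hi : i ∈ S) : relocate v e hU i = e ⟨i, hi⟩ := dif_pos hi

lemma relocate_apply_of_notMem {i : A} (hi : i ∉ S) : relocate v e hU i = v i := dif_neg hi

lemma relocate_mem {i : A} (hi : i ∈ S) : relocate v e hU i ∈ U := by
  rw [relocate_apply_of_mem e hU hi]
  exact (e _).2

variable [Fintype A] {G : SimpleGraph V} {P Q : Finset V} {t : T}

lemma util_le_util_relocate_of_mem (τ : A → T) (hP : ∀ x ∈ P, ∀ y, G.Adj x y → y ∈ P)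
    (hQ : ∀ x ∈ Q, ∀ y, G.Adj x y → y ∈ Q) (hfree : ∀ i, v i ∉ P)
    (hS : ∀ i, i ∈ S ↔ v i ∈ Q ∧ τ i = t) (hUP : U ⊆ P)
    (hUadj : 2 ≤ #S → ∀ x ∈ U, ∃ y ∈ U, G.Adj x y) {i : A} (hi : i ∈ S) :
    util G τ v i ≤ util G τ (relocate v e hU) i := by
  rcases lt_or_ge #S 2 with hS₁ | hS₂
  · rw [util_eq_zero G τ]
    · exact util_nonneg G τ _ i
    intro j hj hτ
    have hadj := (mem_filter.1 hj).2
    have hjS : j ∈ S :=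
      (hS j).2 ⟨hQ _ ((hS i).1 hi).1 _ hadj, hτ.trans ((hS i).1 hi).2⟩
    obtain rfl : j = i := card_le_one.1 (by omega) j hjS i hi
    exact G.irrefl hadj
  · set w := relocate v e hU
    have hwP : ∀ j, w j ∈ P → j ∈ S := fun j hj =>
      by_contra fun hjS => hfree j (relocate_apply_of_notMem e hU hjS ▸ hj)
    obtain ⟨y, hyU, hxy⟩ := hUadj hS₂ _ (relocate_mem e hU hi)
    have hwy : w (e.symm ⟨y, hyU⟩) = y := by
      rw [relocate_apply_of_mem e hU (e.symm ⟨y, hyU⟩).2]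
      simp
    refine (util_le_one G τ v i).trans_eq (util_eq_one G τ
      ⟨_, mem_filter.2 ⟨mem_univ _, hwy ▸ hxy⟩⟩ fun k hk => ?_).symm
    have hkS := hwP k (hP _ (hUP (relocate_mem e hU hi)) _ (mem_filter.1 hk).2)
    rw [((hS k).1 hkS).2, ((hS i).1 hi).2]

lemma util_le_util_relocate_of_notMem (τ : A → T) (hP : ∀ x ∈ P, ∀ y, G.Adj x y → y ∈ P)
    (hQ : ∀ x ∈ Q, ∀ y, G.Adj x y → y ∈ Q) (hfree : ∀ i, v i ∉ P)
    (hS : ∀ i, i ∈ S ↔ v i ∈ Q ∧ τ i = t) (hUP : U ⊆ P) {i : A} (hi : i ∉ S) :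
    util G τ v i ≤ util G τ (relocate v e hU) i := by
  have hwi : relocate v e hU i = v i := relocate_apply_of_notMem e hU hi
  apply util_le_util_of_occNbrs_subset
  · intro j hj
    have hadj : G.Adj (v i) (relocate v e hU j) := hwi ▸ (mem_filter.1 hj).2
    by_cases hjS : j ∈ S
    · exact absurd (hP _ (hUP (relocate_mem e hU hjS)) _ hadj.symm) (hfree i)
    · rw [relocate_apply_of_notMem e hU hjS] at hadj
      exact mem_filter.2 ⟨mem_univ _, hadj⟩
  · intro j hj
    obtain ⟨hj, hτ⟩ := mem_filter.1 hj
    have hadj := (mem_filter.1 hj).2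
    have hjS : j ∉ S := fun hjS => hi <|
      (hS i).2 ⟨hQ _ ((hS j).1 hjS).1 _ hadj.symm, hτ.symm.trans ((hS j).1 hjS).2⟩
    refine mem_filter.2 ⟨mem_univ _, ?_⟩
    rwa [hwi, relocate_apply_of_notMem e hU hjS]

theorem SW_le_SW_relocate (τ : A → T) (hP : ∀ x ∈ P, ∀ y, G.Adj x y → y ∈ P)
    (hQ : ∀ x ∈ Q, ∀ y, G.Adj x y → y ∈ Q) (hfree : ∀ i, v i ∉ P)
    (hS : ∀ i, i ∈ S ↔ v i ∈ Q ∧ τ i = t) (hUP : U ⊆ P)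
    (hUadj : 2 ≤ #S → ∀ x ∈ U, ∃ y ∈ U, G.Adj x y) :
    SW G τ v ≤ SW G τ (relocate v e hU) :=
  sum_le_sum fun i _ =>
    if hi : i ∈ S then util_le_util_relocate_of_mem e hU τ hP hQ hfree hS hUP hUadj hi
    else util_le_util_relocate_of_notMem e hU τ hP hQ hfree hS hUP hi

end Relocation

lemma exists_forall_notMem_of_card_lt {ι : Type*} [Fintype A] {C : ι → Finset V}
    (hdisj : Pairwise fun j j' => Disjoint (C j) (C j')) (v : A ↪ V) {s : Finset ι}
    (hs : Fintype.card A < #s) :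
    ∃ p ∈ s, ∀ i, v i ∉ C p := by
  by_contra! h
  choose f hf using h
  obtain ⟨x, y, hxy, hfxy⟩ :=
    Fintype.exists_ne_map_eq_of_card_lt (fun p : s => f p p.2) (by simpa using hs)
  exact disjoint_left.1 (hdisj (Subtype.coe_injective.ne hxy)) (hf x x.2) (hfxy ▸ hf y y.2)

def agentsOutside [Fintype A] {m : ℕ} (v : A ↪ V) (C : Fin m → Finset V) (n : ℕ) : Finset A :=
  univ.filter fun i => ∃ j : Fin m, n ≤ (j : ℕ) ∧ v i ∈ C j

theorem exists_SW_le_agentsOutside_ssubset [Fintype A] (G : SimpleGraph V) (τ : A → T)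
    {m n : ℕ} (hA : Fintype.card A ≤ n) {C : Fin m → Finset V}
    (hconn : ∀ j, (G.induce ((C j) : Set V)).Connected)
    (hclosed : ∀ j, ∀ x ∈ C j, ∀ y : V, G.Adj x y → y ∈ C j)
    (hdisj : Pairwise fun j j' => Disjoint (C j) (C j'))
    (hsorted : ∀ j j' : Fin m, j ≤ j' → (C j').card ≤ (C j).card)
    {v : A ↪ V} (hv : (agentsOutside v C n).Nonempty) :
    ∃ v' : A ↪ V, SW G τ v ≤ SW G τ v' ∧ agentsOutside v' C n ⊂ agentsOutside v C n := by
  obtain ⟨i₀, hi₀⟩ := hv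
  obtain ⟨q, hnq, hi₀q⟩ := (mem_filter.1 hi₀).2
  have hq : q ∉ Iio ⟨n, hnq.trans_lt q.2⟩ := by simpa [Fin.le_def] using hnq
  obtain ⟨p, hp, hfree⟩ := exists_forall_notMem_of_card_lt hdisj v
    (s := insert q (Iio ⟨n, hnq.trans_lt q.2⟩))
    (by rw [card_insert_of_notMem hq, Fin.card_Iio, Fin.val_mk]; omega)
  have hpn : (p : ℕ) < n := by
    rcases mem_insert.1 hp with rfl | hp
    · exact absurd hi₀q (hfree i₀)
    · simpa [Fin.lt_def] using hp
  set S := univ.filter fun i => v i ∈ C q ∧ τ i = τ i₀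
  have hS : ∀ i, i ∈ S ↔ v i ∈ C q ∧ τ i = τ i₀ := by simp [S]
  have hSp : #S ≤ #(C p) := calc
    #S ≤ #(C q) := card_le_card_of_injOn v (fun i hi => ((hS i).1 hi).1) v.injective.injOn
    _ ≤ #(C p) := hsorted p q (Fin.le_def.2 (by omega))
  obtain ⟨U, hUP, hUS, hUadj⟩ :
      ∃ U ⊆ C p, #U = #S ∧ (2 ≤ #S → ∀ x ∈ U, ∃ y ∈ U, G.Adj x y) := by
    rcases lt_or_ge #S 2 with h | h
    · obtain ⟨U, hUP, hUS⟩ := exists_subset_card_eq hSp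
      exact ⟨U, hUP, hUS, by omega⟩
    · obtain ⟨U, hUP, hUS, hU⟩ := exists_subset_card_eq_forall_exists_adj (hconn p) h hSp
      exact ⟨U, hUP, hUS, fun _ => hU⟩
  have hU : ∀ i, v i ∉ U := fun i hi => hfree i (hUP hi)
  set e := equivOfCardEq hUS.symm
  refine ⟨relocate v e hU,
    SW_le_SW_relocate e hU τ (hclosed p) (hclosed q) hfree hS hUP hUadj, ?_⟩
  have hout : ∀ i ∈ agentsOutside (relocate v e hU) C n, i ∉ S ∧ i ∈ agentsOutside v C n := by
    intro i hi
    obtain ⟨j, hnj, hij⟩ := (mem_filter.1 hi).2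
    have hiS : i ∉ S := fun hiS => by
      obtain rfl : j = p := by_contra fun hjp =>
        disjoint_left.1 (hdisj hjp) hij (hUP (relocate_mem e hU hiS))
      omega
    refine ⟨hiS, mem_filter.2 ⟨mem_univ _, j, hnj, ?_⟩⟩
    rwa [relocate_apply_of_notMem e hU hiS] at hij
  exact (ssubset_iff_of_subset fun i hi => (hout i hi).2).2
    ⟨i₀, hi₀, fun h => (hout i₀ h).1 ((hS i₀).2 ⟨hi₀q, rfl⟩)⟩

theorem welfare_optimal_on_largest_components_general
    {V A : Type*} [Fintype V] [Fintype A]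
    (G : SimpleGraph V) (τ : A → Bool) (r b m : ℕ)
    (hr : (univ.filter (fun i => τ i = true)).card = r)
    (hb : (univ.filter (fun i => τ i = false)).card = b)
    (hrb : r + b ≤ Fintype.card V)
    (C : Fin m → Finset V)
    (hconn : ∀ j, (G.induce ((C j) : Set V)).Connected)
    (hclosed : ∀ j, ∀ x ∈ C j, ∀ y : V, G.Adj x y → y ∈ C j)
    (hdisj : ∀ j j' : Fin m, j ≠ j' → Disjoint (C j) (C j'))
    (hcover : ∀ x : V, ∃ j, x ∈ C j)
    (hsorted : ∀ j j' : Fin m, j ≤ j' → (C j').card ≤ (C j).card) :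
    ∃ v : A ↪ V, (∀ v' : A ↪ V, SW G τ v' ≤ SW G τ v) ∧
      ∀ i : A, ∃ j : Fin m, (j : ℕ) < r + b ∧ v i ∈ C j := by
  have hA : Fintype.card A = r + b := by
    rw [← hr, ← hb, ← card_univ, ← card_filter_add_card_filter_not (p := fun i => τ i = true)]
    simp
  have : Nonempty (A ↪ V) := Function.Embedding.nonempty_of_card_le (hA ▸ hrb)
  have : Nonempty {v : A ↪ V // ∀ v', SW G τ v' ≤ SW G τ v} :=
    let ⟨v, hv⟩ := Finite.exists_max (SW G τ); ⟨⟨v, hv⟩⟩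
  obtain ⟨⟨v, hopt⟩, hmin⟩ := Finite.exists_min
    fun v : {v : A ↪ V // ∀ v', SW G τ v' ≤ SW G τ v} => #(agentsOutside v.1 C (r + b))
  have hempty : agentsOutside v C (r + b) = ∅ := by
    by_contra h
    obtain ⟨v', hle, hlt⟩ := exists_SW_le_agentsOutside_ssubset G τ hA.le hconn hclosed
      hdisj hsorted (nonempty_iff_ne_empty.2 h)
    exact (card_lt_card hlt).not_ge (hmin ⟨v', fun w => (hopt w).trans hle⟩)
  refine ⟨v, hopt, fun i => ?_⟩
  obtain ⟨j, hj⟩ := hcover (v i)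
  refine ⟨j, not_le.1 fun hj' => ?_, hj⟩
  have : i ∈ agentsOutside v C (r + b) := mem_filter.2 ⟨mem_univ _, j, hj', hj⟩
  simp [hempty] at this

theorem welfare_optimal_on_largest_components
    {V A : Type*} [Fintype V] [Fintype A]
    (G : SimpleGraph V) (τ : A → Bool) (r b m : ℕ)
    (hr : (univ.filter (fun i => τ i = true)).card = r)
    (hb : (univ.filter (fun i => τ i = false)).card = b)
    (hrb : r + b ≤ Fintype.card V)
    (C : Fin m → Finset V)
    (hne : ∀ j, (C j).Nonempty)
    (hconn : ∀ j, (G.induce ((C j) : Set V)).Connected)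
    (hclosed : ∀ j, ∀ x ∈ C j, ∀ y : V, G.Adj x y → y ∈ C j)
    (hdisj : ∀ j j' : Fin m, j ≠ j' → Disjoint (C j) (C j'))
    (hcover : ∀ x : V, ∃ j, x ∈ C j)
    (hsorted : ∀ j j' : Fin m, j ≤ j' → (C j').card ≤ (C j).card) :
    ∃ v : A ↪ V, (∀ v' : A ↪ V, SW G τ v' ≤ SW G τ v) ∧
      ∀ i : A, ∃ j : Fin m, (j : ℕ) < r + b ∧ v i ∈ C j :=
  welfare_optimal_on_largest_components_general G τ r b m hr hb hrb C hconn hclosed hdisj hcover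
    hsorted
end
end
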